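/- The proof system SKHM is sound with respect to the class of all models: every L_Khm formula derivable in SKHM is valid. -/
import Mathlib


/-- Formulas of the language L_Khm over a countable set of proposition
letters (represented by `ℕ`): `φ ::= p | ¬φ | (φ∧φ) | Khm(φ,φ,φ)`. -/
inductive Formula : Type
  | atom : ℕ → Formula
  | neg : Formula → Formula
  | and : Formula → Formula → Formula
  | khm : Formula → Formula → Formula → Formula
deriving DecidableEq

namespace Formula

/-- The falsum `⊥`, as a standard abbreviation. -/
def falsum : Formula := and (atom 0) (neg (atom 0))

/-- The verum `⊤`. -/
def top : Formula := neg falsum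

/-- Material implication, as a standard abbreviation. -/
def imp (φ ψ : Formula) : Formula := neg (and φ (neg ψ))

/-- Biimplication. -/
def biimp (φ ψ : Formula) : Formula := and (imp φ ψ) (imp ψ φ)

/-- The universal modality `Uφ := Khm(¬φ, ⊤, ⊥)`. -/
def U (φ : Formula) : Formula := khm (neg φ) top falsum

/-- Uniform substitution of formulas for proposition letters. -/
def subst (f : ℕ → Formula) : Formula → Formula
  | atom n => f n
  | neg φ => neg (subst f φ)
  | and φ ψ => and (subst f φ) (subst f ψ)
  | khm φ χ ψ => khm (subst f φ) (subst f χ) (subst f ψ)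

end Formula

/-- A model (ability map): a labelled transition system over action symbols `Act`,
with a set of states `S`, transitions `R`, and valuation `V`. -/
structure Model (Act : Type) where
  S : Type
  R : Act → S → S → Prop
  V : S → Set ℕ

namespace Model

variable {Act : Type} (M : Model Act)

/-- `M.bigStep σ s t` : `s →σ t`, i.e. `t` is reachable from `s` by executing the
sequence of actions `σ`. -/
def bigStep : List Act → M.S → M.S → Prop
  | [], s, t => s = t
  | a :: σ, s, t => ∃ u, M.R a s u ∧ bigStep σ u t

/-- `σ = a₁⋯aₙ` is strongly executable at `s` if for each `0 ≤ k < n`,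
`s →σ_k t` implies `t` has at least one `a_{k+1}`-successor. -/
def stronglyExec (σ : List Act) (s : M.S) : Prop :=
  ∀ k (h : k < σ.length) (t : M.S),
    M.bigStep (σ.take k) s t → ∃ u, M.R (σ.get ⟨k, h⟩) t u

/-- Satisfaction. `M.sat (Formula.khm ψ χ φ) s` holds iff there is `σ ∈ Act*`
such that for every `s'` with `M, s' ⊨ ψ`: `σ` is strongly `χ`-executable at `s'`
(strongly executable, and all strictly intermediate states satisfy `χ`) and
`M, t ⊨ φ` for all `t` with `s' →σ t`. -/
def sat : Formula → M.S → Prop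
  | .atom n, s => n ∈ M.V s
  | .neg φ, s => ¬ sat φ s
  | .and φ ψ, s => sat φ s ∧ sat ψ s
  | .khm ψ χ φ, s => ∃ σ : List Act, ∀ s', sat ψ s' →
      (M.stronglyExec σ s' ∧
        ∀ k, 0 < k → k < σ.length → ∀ t, M.bigStep (σ.take k) s' t → sat χ t) ∧
      (∀ t, M.bigStep σ s' t → sat φ t)

end Model

/-- A formula is valid (w.r.t. the class of all models over action symbols `Act`)
if it is satisfied at every state of every model. -/
def Valid (Act : Type) (φ : Formula) : Prop :=
  ∀ M : Model Act, Nonempty M.S → ∀ s : M.S, M.sat φ s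

/-- Boolean evaluation treating proposition letters and `Khm`-formulas as atoms. -/
def evalB (v : Formula → Bool) : Formula → Bool
  | .atom n => v (.atom n)
  | .neg φ => ! evalB v φ
  | .and φ ψ => evalB v φ && evalB v ψ
  | .khm ψ χ φ => v (.khm ψ χ φ)

/-- Propositional tautologies. -/
def Tautology (φ : Formula) : Prop := ∀ v, evalB v φ = true

open Formula in
/-- Derivability in the proof system SKHM. -/
inductive Deriv : Formula → Prop
  | taut {φ} : Tautology φ → Deriv φ
  | distU (p q) : Deriv (((U p).and (U (p.imp q))).imp (U q))
  | tU (p) : Deriv ((U p).imp p)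
  | fourKhmU (p o q) : Deriv ((khm p o q).imp (U (khm p o q)))
  | fiveKhmU (p o q) : Deriv ((neg (khm p o q)).imp (U (neg (khm p o q))))
  | empKhm (p q) : Deriv ((U (p.imp q)).imp (khm p falsum q))
  | compKhm (p o r q) :
      Deriv ((((khm p o r).and (khm r o q)).and (U (r.imp o))).imp (khm p o q))
  | oneKhm (p o q) :
      Deriv (((khm p o q).and (neg (khm p falsum q))).imp (khm p falsum o))
  | uKhm (p' p o o' q q') :
      Deriv (((((U (p'.imp p)).and (U (o.imp o'))).and (U (q.imp q'))).and
        (khm p o q)).imp (khm p' o' q'))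
  | mp {φ ψ} : Deriv (φ.imp ψ) → Deriv φ → Deriv ψ
  | necU {φ} : Deriv φ → Deriv (U φ)
  | sub {φ} (f : ℕ → Formula) : Deriv φ → Deriv (φ.subst f)

/-- Conjunction of a finite list of formulas. -/
def conjList : List Formula → Formula
  | [] => Formula.top
  | φ :: L => φ.and (conjList L)

/-- A set of formulas is SKHM-consistent if no finite conjunction of its
members has its negation derivable in SKHM. -/
def ConsistentSet (Γ : Set Formula) : Prop :=
  ∀ L : List Formula, (∀ φ ∈ L, φ ∈ Γ) → ¬ Deriv (Formula.neg (conjList L))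

/-- Maximal SKHM-consistent set. -/
def MCS (Γ : Set Formula) : Prop :=
  ConsistentSet Γ ∧ ∀ Δ, ConsistentSet Δ → Γ ⊆ Δ → Δ = Γ

/-- `Δ|Khm`: the positive `Khm`-formulas of `Δ`. -/
def khmPart (Δ : Set Formula) : Set Formula :=
  {θ ∈ Δ | ∃ ψ χ φ, θ = Formula.khm ψ χ φ}

/-- `Φ_Γ`: the set of all MCSs `Δ` with `Δ|Khm = Γ|Khm`. -/
def PhiGamma (Γ : Set Formula) : Set (Set Formula) :=
  {Δ | MCS Δ ∧ khmPart Δ = khmPart Γ}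

/-- Canonical action symbols: `⟨ψ,⊥,φ⟩` (`one ψ φ`) and `⟨χ^ψ,φ⟩` (`two χ ψ φ`). -/
inductive CanAct : Type
  | one : Formula → Formula → CanAct
  | two : Formula → Formula → Formula → CanAct
deriving DecidableEq

/-- The formula in the last component of a canonical action. -/
def CanAct.post : CanAct → Formula
  | .one _ φ => φ
  | .two _ _ φ => φ

/-- The canonical action set
`Σ_Γ = {⟨ψ,⊥,φ⟩ : Khm(ψ,⊥,φ) ∈ Γ} ∪ {⟨χ^ψ,φ⟩ : Khm(ψ,χ,φ) ∈ Γ, ¬Khm(ψ,⊥,φ) ∈ Γ}`. -/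
def SigmaGamma (Γ : Set Formula) : Set CanAct :=
  {a | (∃ ψ φ, a = CanAct.one ψ φ ∧ Formula.khm ψ Formula.falsum φ ∈ Γ) ∨
       (∃ χ ψ φ, a = CanAct.two χ ψ φ ∧ Formula.khm ψ χ φ ∈ Γ ∧
          Formula.neg (Formula.khm ψ Formula.falsum φ) ∈ Γ)}

/-- Canonical states: pairs `(Δ, χ^ψ)` (the marker `χ^ψ` is the pair `(χ, ψ)`)
with `χ ∈ Δ ∈ Φ_Γ`, and either `⟨χ^ψ,φ⟩ ∈ Σ_Γ` for some `φ`, or `⟨ψ,⊥,χ⟩ ∈ Σ_Γ`. -/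
def CanStates (Γ : Set Formula) : Set (Set Formula × Formula × Formula) :=
  {w | w.1 ∈ PhiGamma Γ ∧ w.2.1 ∈ w.1 ∧
       ((∃ φ, CanAct.two w.2.1 w.2.2 φ ∈ SigmaGamma Γ) ∨
        CanAct.one w.2.2 w.2.1 ∈ SigmaGamma Γ)}

/-- The canonical model `M^c_Γ` over the action set `Σ_Γ`. For a canonical state
`w`, `L(w) = w.1.1` and `R(w) = w.1.2`. -/
def canonicalModel (Γ : Set Formula) : Model {a : CanAct // a ∈ SigmaGamma Γ} where
  S := {w : Set Formula × Formula × Formula // w ∈ CanStates Γ}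
  R a w w' :=
    match a.1 with
    | CanAct.one ψ φ => ψ ∈ w.1.1 ∧ w'.1.2 = (φ, ψ)
    | CanAct.two χ ψ φ => w.1.2 = (χ, ψ) ∧ φ ∈ w'.1.1
  V w := {n | Formula.atom n ∈ w.1.1}

namespace Model

variable {Act : Type} {M : Model Act}

theorem sat_and' {φ ψ : Formula} {s : M.S} :
    M.sat (φ.and ψ) s ↔ M.sat φ s ∧ M.sat ψ s := Iff.rfl

theorem sat_neg' {φ : Formula} {s : M.S} :
    M.sat φ.neg s ↔ ¬ M.sat φ s := Iff.rfl

theorem sat_khm' {ψ χ φ : Formula} {s : M.S} :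
    M.sat (.khm ψ χ φ) s ↔ ∃ σ : List Act, ∀ s', M.sat ψ s' →
      (M.stronglyExec σ s' ∧
        ∀ k, 0 < k → k < σ.length → ∀ t, M.bigStep (σ.take k) s' t → M.sat χ t) ∧
      (∀ t, M.bigStep σ s' t → M.sat φ t) := Iff.rfl

theorem sat_imp' {φ ψ : Formula} {s : M.S} :
    M.sat (φ.imp ψ) s ↔ (M.sat φ s → M.sat ψ s) := by
  show ¬(M.sat φ s ∧ ¬ M.sat ψ s) ↔ _
  tauto

theorem sat_falsum' {s : M.S} : M.sat Formula.falsum s ↔ False := by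
  show ((0 ∈ M.V s) ∧ ¬ (0 ∈ M.V s)) ↔ False
  tauto

theorem bigStep_append' {σ₁ σ₂ : List Act} {s t : M.S} :
    M.bigStep (σ₁ ++ σ₂) s t ↔ ∃ u, M.bigStep σ₁ s u ∧ M.bigStep σ₂ u t := by
  induction σ₁ generalizing s with
  | nil =>
    constructor
    · intro h; exact ⟨s, rfl, h⟩
    · rintro ⟨u, rfl, h⟩; exact h
  | cons a σ ih =>
    constructor
    · rintro ⟨u, hu, h⟩
      obtain ⟨v, hv1, hv2⟩ := ih.mp h
      exact ⟨v, ⟨u, hu, hv1⟩, hv2⟩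
    · rintro ⟨v, ⟨u, hu, hv1⟩, hv2⟩
      exact ⟨u, hu, ih.mpr ⟨v, hv1, hv2⟩⟩

theorem stronglyExec_nil' (s : M.S) : M.stronglyExec [] s := by
  intro k hk; simp at hk

theorem stronglyExec_cons' {a : Act} {σ : List Act} {s : M.S} :
    M.stronglyExec (a :: σ) s ↔
      (∃ u, M.R a s u) ∧ ∀ u, M.R a s u → M.stronglyExec σ u := by
  constructor
  · intro h
    refine ⟨?_, ?_⟩
    · exact h 0 (by simp) s rfl
    · intro u hu k hk t ht
      exact h (k + 1) (by simpa using Nat.succ_lt_succ hk) t ⟨u, hu, ht⟩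
  · rintro ⟨⟨u0, hu0⟩, h2⟩ k hk t ht
    cases k with
    | zero =>
      cases ht
      exact ⟨u0, hu0⟩
    | succ k =>
      obtain ⟨u, hu, ht'⟩ := ht
      exact h2 u hu k (by simpa using hk) t ht'

theorem exists_bigStep_of_stronglyExec {σ : List Act} {s : M.S}
    (h : M.stronglyExec σ s) : ∃ t, M.bigStep σ s t := by
  induction σ generalizing s with
  | nil => exact ⟨s, rfl⟩
  | cons a σ ih =>
    rw [stronglyExec_cons'] at h
    obtain ⟨⟨u, hu⟩, h2⟩ := h
    obtain ⟨t, ht⟩ := ih (h2 u hu)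
    exact ⟨t, u, hu, ht⟩

theorem stronglyExec_append' {σ₁ σ₂ : List Act} {s : M.S}
    (h1 : M.stronglyExec σ₁ s)
    (h2 : ∀ u, M.bigStep σ₁ s u → M.stronglyExec σ₂ u) :
    M.stronglyExec (σ₁ ++ σ₂) s := by
  induction σ₁ generalizing s with
  | nil => exact h2 s rfl
  | cons a σ ih =>
    rw [stronglyExec_cons'] at h1
    rw [List.cons_append, stronglyExec_cons']
    exact ⟨h1.1, fun u hu => ih (h1.2 u hu) (fun v hv => h2 v ⟨u, hu, hv⟩)⟩

theorem sat_U' {φ : Formula} {s : M.S} :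
    M.sat (Formula.U φ) s ↔ ∀ t, M.sat φ t := by
  constructor
  · rintro ⟨σ, h⟩ t
    by_contra ht
    obtain ⟨⟨hse, _⟩, hend⟩ := h t ht
    obtain ⟨u, hu⟩ := exists_bigStep_of_stronglyExec hse
    exact sat_falsum'.mp (hend u hu)
  · intro h
    exact ⟨[], fun s' hs' => absurd (h s') hs'⟩

/-- The model obtained by reinterpreting atom `n` as `f n`. -/
def substModel (M : Model Act) (f : ℕ → Formula) : Model Act where
  S := M.S
  R := M.R
  V s := {n | M.sat (f n) s}

theorem substModel_bigStep {f : ℕ → Formula} {σ : List Act} {s t : M.S} :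
    (M.substModel f).bigStep σ s t ↔ M.bigStep σ s t := by
  induction σ generalizing s with
  | nil => exact Iff.rfl
  | cons a σ ih =>
    show (∃ u, M.R a s u ∧ (M.substModel f).bigStep σ u t) ↔ _
    simp only [ih]
    exact Iff.rfl

theorem substModel_stronglyExec {f : ℕ → Formula} {σ : List Act} {s : M.S} :
    (M.substModel f).stronglyExec σ s ↔ M.stronglyExec σ s := by
  unfold stronglyExec
  constructor
  · intro h k hk t ht
    exact h k hk t (substModel_bigStep.mpr ht)
  · intro h k hk t ht
    exact h k hk t (substModel_bigStep.mp ht)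

theorem sat_subst {f : ℕ → Formula} (φ : Formula) :
    ∀ s : M.S, M.sat (φ.subst f) s ↔ (M.substModel f).sat φ s := by
  induction φ with
  | atom n => intro s; exact Iff.rfl
  | neg φ ih => intro s; exact not_congr (ih s)
  | and φ ψ ih1 ih2 => intro s; exact and_congr (ih1 s) (ih2 s)
  | khm ψ χ φ ih1 ih2 ih3 =>
    intro s
    show (∃ σ : List Act, _) ↔ (∃ σ : List Act, _)
    apply exists_congr; intro σ
    apply forall_congr'; intro s'
    rw [ih1 s']
    apply imp_congr_right; intro _
    constructor
    · rintro ⟨⟨hse, hint⟩, hend⟩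
      refine ⟨⟨substModel_stronglyExec.mpr hse, ?_⟩, ?_⟩
      · intro k h1 h2 t ht
        exact (ih2 t).mp (hint k h1 h2 t (substModel_bigStep.mp ht))
      · intro t ht
        exact (ih3 t).mp (hend t (substModel_bigStep.mp ht))
    · rintro ⟨⟨hse, hint⟩, hend⟩
      refine ⟨⟨substModel_stronglyExec.mp hse, ?_⟩, ?_⟩
      · intro k h1 h2 t ht
        exact (ih2 t).mpr (hint k h1 h2 t (substModel_bigStep.mpr ht))
      · intro t ht
        exact (ih3 t).mpr (hend t (substModel_bigStep.mpr ht))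

end Model

theorem taut_valid {Act : Type} {φ : Formula} (h : Tautology φ) : Valid Act φ := by
  intro M _ s
  classical
  let v : Formula → Bool := fun ψ => decide (M.sat ψ s)
  have key : ∀ ψ, evalB v ψ = true ↔ M.sat ψ s := by
    intro ψ
    induction ψ with
    | atom n => simp [evalB, v]
    | neg φ ih => rw [Model.sat_neg', ← ih]; simp [evalB]
    | and φ ψ ih1 ih2 => rw [Model.sat_and', ← ih1, ← ih2]; simp [evalB]
    | khm ψ χ φ _ _ _ => simp [evalB, v]
  exact (key φ).mp (h v)

/-- soundness of SKHM: every derivable formula is valid. -/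
theorem skhm_soundness (Act : Type) [Countable Act] [Nonempty Act]
    (φ : Formula) (h : Deriv φ) : Valid Act φ := by
  induction h with
  | taut h => exact taut_valid h
  | distU p q =>
    intro M _ s
    simp only [Model.sat_imp', Model.sat_and', Model.sat_U']
    rintro ⟨h1, h2⟩ t
    exact h2 t (h1 t)
  | tU p =>
    intro M _ s
    simp only [Model.sat_imp', Model.sat_U']
    exact fun h => h s
  | fourKhmU p o q =>
    intro M _ s
    simp only [Model.sat_imp', Model.sat_U']
    exact fun h t => h
  | fiveKhmU p o q =>
    intro M _ s
    simp only [Model.sat_imp', Model.sat_neg', Model.sat_U']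
    exact fun h t => h
  | empKhm p q =>
    intro M _ s
    simp only [Model.sat_imp', Model.sat_U', Model.sat_khm']
    intro h
    refine ⟨[], fun s' hs' => ⟨⟨Model.stronglyExec_nil' s', ?_⟩, ?_⟩⟩
    · intro k hk0 hklen
      simp at hklen
    · intro t ht
      cases ht
      exact h s' hs'
  | compKhm p o r q =>
    intro M _ s
    simp only [Model.sat_imp', Model.sat_and', Model.sat_U', Model.sat_khm']
    rintro ⟨⟨⟨σ₁, w1⟩, ⟨σ₂, w2⟩⟩, hro⟩
    refine ⟨σ₁ ++ σ₂, fun s' hs' => ?_⟩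
    obtain ⟨⟨hse1, hint1⟩, hend1⟩ := w1 s' hs'
    refine ⟨⟨?_, ?_⟩, ?_⟩
    · exact Model.stronglyExec_append' hse1
        (fun u hu => (w2 u (hend1 u hu)).1.1)
    · intro k hk0 hklen t ht
      rw [List.length_append] at hklen
      rw [List.take_append] at ht
      rcases lt_trichotomy k σ₁.length with hlt | heq | hgt
      · rw [show k - σ₁.length = 0 by omega, List.take_zero, List.append_nil] at ht
        exact hint1 k hk0 hlt t ht
      · rw [heq, List.take_length, Nat.sub_self, List.take_zero, List.append_nil] at ht
        exact hro t (hend1 t ht)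
      · rw [List.take_of_length_le (le_of_lt hgt), Model.bigStep_append'] at ht
        obtain ⟨u, hu1, hu2⟩ := ht
        exact (w2 u (hend1 u hu1)).1.2 (k - σ₁.length) (by omega) (by omega) t hu2
    · intro t ht
      rw [Model.bigStep_append'] at ht
      obtain ⟨u, hu1, hu2⟩ := ht
      exact (w2 u (hend1 u hu1)).2 t hu2
  | oneKhm p o q =>
    intro M _ s
    simp only [Model.sat_imp', Model.sat_and', Model.sat_neg', Model.sat_khm']
    rintro ⟨⟨σ, w⟩, hneg⟩
    by_cases hp : ∃ s₀, M.sat p s₀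
    · obtain ⟨s₀, hs₀⟩ := hp
      match σ, w with
      | [], w =>
        exact absurd ⟨[], fun s' hs' =>
          ⟨⟨(w s' hs').1.1, fun k hk0 hklen t ht => by simp at hklen⟩,
            (w s' hs').2⟩⟩ hneg
      | [a], w =>
        exact absurd ⟨[a], fun s' hs' =>
          ⟨⟨(w s' hs').1.1, fun k hk0 hklen t ht => by simp at hklen; omega⟩,
            (w s' hs').2⟩⟩ hneg
      | a :: b :: rest, w =>
        refine ⟨[a], fun s' hs' => ?_⟩
        obtain ⟨⟨hse, hint⟩, _⟩ := w s' hs'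
        rw [Model.stronglyExec_cons'] at hse
        refine ⟨⟨?_, ?_⟩, ?_⟩
        · rw [Model.stronglyExec_cons']
          exact ⟨hse.1, fun u _ => Model.stronglyExec_nil' u⟩
        · intro k hk0 hklen t ht
          simp at hklen
          omega
        · intro t ht
          obtain ⟨u, hu, hut⟩ := ht
          have hstep : M.bigStep ((a :: b :: rest).take 1) s' t := ⟨u, hu, hut⟩
          exact hint 1 (by omega) (by simp only [List.length_cons]; omega) t hstep
    · exact ⟨[], fun s' hs' => absurd ⟨s', hs'⟩ hp⟩
  | uKhm p' p o o' q q' =>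
    intro M _ s
    simp only [Model.sat_imp', Model.sat_and', Model.sat_U', Model.sat_khm']
    rintro ⟨⟨⟨hpp, hoo⟩, hqq⟩, σ, w⟩
    refine ⟨σ, fun s' hs' => ?_⟩
    obtain ⟨⟨hse, hint⟩, hend⟩ := w s' (hpp s' hs')
    exact ⟨⟨hse, fun k h1 h2 t ht => hoo t (hint k h1 h2 t ht)⟩,
      fun t ht => hqq t (hend t ht)⟩
  | mp _ _ ih1 ih2 =>
    intro M hne s
    exact Model.sat_imp'.mp (ih1 M hne s) (ih2 M hne s)
  | necU _ ih =>
    intro M hne s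
    rw [Model.sat_U']
    intro t
    exact ih M hne t
  | sub f _ ih =>
    intro M hne s
    rw [Model.sat_subst]
    exact ih (M.substModel f) hne s
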